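/- arXiv:2309.10657 — 3 statements merged into one kernel-verified Lean document; each statement's English description precedes it below -/
import Mathlib

section
/- Let S be a set, h : S → ℝ, and γ : S → ℝ with 0 ≤ γ(s) ≤ 1 for all s ∈ S. Let (s_t)_{t∈ℕ} be a sequence of states such that h(s_{t+1}) ≥ (1 − γ(s_t))·h(s_t) for all t ∈ ℕ. Then for every t ∈ ℕ, h(s_t) ≥ (∏_{i=0}^{t−1} (1 − γ(s_i)))·h(s₀); in particular, if h(s₀) ≥ 0 then h(s_t) ≥ 0 for all t ∈ ℕ. -/
/-- Along any trajectory satisfying the one-step adaptive CBF inequality,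
the barrier value satisfies the telescoping product bound; in particular,
safety of the initial state propagates to all times. -/
theorem adaptive_cbf_trajectory_product_bound
    {S : Type*} (h : S → ℝ) (γ : S → ℝ)
    (hγ : ∀ s, 0 ≤ γ s ∧ γ s ≤ 1)
    (s : ℕ → S)
    (hstep : ∀ t : ℕ, h (s (t + 1)) ≥ (1 - γ (s t)) * h (s t)) :
    (∀ t : ℕ, h (s t) ≥ (∏ i ∈ Finset.range t, (1 - γ (s i))) * h (s 0)) ∧
    (h (s 0) ≥ 0 → ∀ t : ℕ, h (s t) ≥ 0) := by
  have key : ∀ t : ℕ, h (s t) ≥ (∏ i ∈ Finset.range t, (1 - γ (s i))) * h (s 0) := by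
    intro t
    induction t with
    | zero => simp
    | succ n ih =>
      rw [Finset.prod_range_succ, mul_comm (∏ i ∈ Finset.range n, (1 - γ (s i))) _,
        mul_assoc]
      calc h (s (n + 1)) ≥ (1 - γ (s n)) * h (s n) := hstep n
        _ ≥ (1 - γ (s n)) * ((∏ i ∈ Finset.range n, (1 - γ (s i))) * h (s 0)) :=
          mul_le_mul_of_nonneg_left ih (by linarith [(hγ (s n)).2])
  refine ⟨key, fun h0 t => ?_⟩
  have := key t
  have hp : 0 ≤ ∏ i ∈ Finset.range t, (1 - γ (s i)) :=
    Finset.prod_nonneg fun i _ => by linarith [(hγ (s i)).2]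
  nlinarith
end

section
/- Let S be a set, f : S × A → S a transition function, h : S → ℝ, and γ ∈ ℝ a constant with 0 ≤ γ ≤ 1. Let κ : S → A be a controller satisfying h(f(s, κ(s))) + (γ − 1)·h(s) ≥ 0 for every s ∈ S with h(s) ≥ 0. Then for every s₀ with h(s₀) ≥ 0, the trajectory s_{t+1} = f(s_t, κ(s_t)) satisfies h(s_t) ≥ (1 − γ)^t · h(s₀) ≥ 0 for all t ∈ ℕ; hence the set C = {s ∈ S : h(s) ≥ 0} is forward invariant under the closed-loop dynamics. -/
/-- Vanilla discrete-time CBF with a fixed coefficient `γ ∈ [0,1]`: a controller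
satisfying the CBF condition at every safe state renders the safe set forward
invariant, with the exponential lower bound `h (s t) ≥ (1 - γ)^t * h s₀ ≥ 0`. -/
theorem fixed_cbf_controller_safe
    {S A : Type*} (f : S × A → S) (h : S → ℝ) (γ : ℝ)
    (hγ0 : 0 ≤ γ) (hγ1 : γ ≤ 1)
    (κ : S → A)
    (hκ : ∀ s, h s ≥ 0 → h (f (s, κ s)) + (γ - 1) * h s ≥ 0) :
    ∀ s₀ : S, h s₀ ≥ 0 →
      ∀ traj : ℕ → S, traj 0 = s₀ →
        (∀ t : ℕ, traj (t + 1) = f (traj t, κ (traj t))) →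
        ∀ t : ℕ, h (traj t) ≥ (1 - γ) ^ t * h s₀ ∧ (1 - γ) ^ t * h s₀ ≥ 0 := by
  intro s₀ hs₀ traj h0 hstep
  have hγ : 0 ≤ 1 - γ := by linarith
  intro t
  induction t with
  | zero => constructor <;> simp [h0, hs₀]
  | succ t ih =>
    obtain ⟨ih1, ih2⟩ := ih
    have ht : h (traj t) ≥ 0 := le_trans ih2 ih1
    have hc := hκ (traj t) ht
    rw [hstep t]
    constructor
    · have : (1 - γ) ^ (t + 1) * h s₀ = (1 - γ) * ((1 - γ) ^ t * h s₀) := by ring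
      rw [this]
      have := mul_le_mul_of_nonneg_left ih1 hγ
      nlinarith
    · positivity
end

section
/- Let S be a set, f : S × A → S a transition function, h : S → ℝ defining the safe set C = {s ∈ S : h(s) ≥ 0}, and γ : S → ℝ with 0 ≤ γ(s) ≤ 1 for all s ∈ S. Suppose κ : S → A is a controller such that h(f(s, κ(s))) + (γ(s) − 1)·h(s) ≥ 0 for all s ∈ C. Then C is forward invariant under the closed-loop dynamics s_{t+1} = f(s_t, κ(s_t)): for every s₀ ∈ C and every t ∈ ℕ, s_t ∈ C. Moreover, along any such trajectory the barrier values satisfy the telescoping bound h(s_t) ≥ (1 − γ(s_{t−1}))·(1 − γ(s_{t−2}))⋯(1 − γ(s₀))·h(s₀). -/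
/-- Lemma 1 of the paper: if the adaptive-CBF QP condition holds for the
controller `κ` at every state of the safe set `C = {s | h s ≥ 0}`, then `C` is
forward invariant under the closed-loop dynamics, and along any closed-loop
trajectory the telescoping bound
`h (s t) ≥ (∏_{i<t} (1 - γ (s i))) * h (s 0)` holds. -/
theorem adaptive_cbf_forward_invariance
    {S A : Type*} (f : S × A → S) (h : S → ℝ) (γ : S → ℝ)
    (hγ : ∀ s, 0 ≤ γ s ∧ γ s ≤ 1)
    (κ : S → A)
    (hκ : ∀ s, h s ≥ 0 → h (f (s, κ s)) + (γ s - 1) * h s ≥ 0) :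
    ∀ s₀ : S, h s₀ ≥ 0 →
      ∀ traj : ℕ → S, traj 0 = s₀ →
        (∀ t : ℕ, traj (t + 1) = f (traj t, κ (traj t))) →
        ∀ t : ℕ, h (traj t) ≥ 0 ∧
          h (traj t) ≥ (∏ i ∈ Finset.range t, (1 - γ (traj i))) * h (traj 0) := by
  intro s₀ hs₀ traj h0 hstep t
  induction t with
  | zero => simpa [h0] using hs₀
  | succ n ih =>
    obtain ⟨ih1, ih2⟩ := ih
    have key := hκ (traj n) ih1
    rw [← hstep n] at key
    have hγn := hγ (traj n)
    have hne : (0:ℝ) ≤ 1 - γ (traj n) := by linarith [hγn.2]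
    have hstep' : h (traj (n + 1)) ≥ (1 - γ (traj n)) * h (traj n) := by
      nlinarith
    constructor
    · nlinarith
    · rw [Finset.prod_range_succ, mul_comm (∏ i ∈ Finset.range n, (1 - γ (traj i))) (1 - γ (traj n)), mul_assoc]
      calc h (traj (n + 1)) ≥ (1 - γ (traj n)) * h (traj n) := hstep'
        _ ≥ (1 - γ (traj n)) * ((∏ i ∈ Finset.range n, (1 - γ (traj i))) * h (traj 0)) :=
          mul_le_mul_of_nonneg_left ih2 hne
end
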